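/- arXiv:1112.1003 — 3 statements merged into one kernel-verified Lean document; each statement's English description precedes it below -/
import Mathlib

section
/- Let φ : ℝ → ℝ be infinitely differentiable on [0, T], and suppose there are constants B > 0, M > 0 and an integer n ≥ 1 such that |φ^{(k)}(t)| ≤ B · ((n+k-1)!/(n-1)!) · M^k for all k ≥ 1 and all t ∈ [0, T]. If moreover φ^{(k)}(t₀) = 0 for all k ≥ 1 whenever φ is constant on [0, t₀], and φ^{(k)}(0) = 0 for all k ≥ 1, then φ is constant on [0, T]. -/
open Set Filter

private lemma my_iteratedDerivWithin_eq {φ : ℝ → ℝ} (hφ : ContDiff ℝ (⊤ : ℕ∞) φ)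
    {s : Set ℝ} (hs : UniqueDiffOn ℝ s) {x : ℝ} (hx : x ∈ s) (k : ℕ) :
    iteratedDerivWithin k φ s x = iteratedDeriv k φ x := by
  have h : HasFTaylorSeriesUpTo (⊤ : ℕ∞) φ (ftaylorSeries ℝ φ) := by
    rw [← hasFTaylorSeriesUpToOn_univ_iff, ← ftaylorSeriesWithin_univ]
    exact (contDiffOn_univ.2 (hφ.of_le (by simp))).ftaylorSeriesWithin uniqueDiffOn_univ
  have h1 := (h.hasFTaylorSeriesUpToOn s).eq_iteratedFDerivWithin_of_uniqueDiffOn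
    (m := k) (by exact_mod_cast le_top) hs hx
  have h2 := h.eq_iteratedFDeriv (m := k) (by exact_mod_cast le_top) x
  rw [iteratedDerivWithin_eq_iteratedFDerivWithin, iteratedDeriv_eq_iteratedFDeriv, ← h1, ← h2]

private lemma my_fact_le (a b : ℕ) : (a + b).factorial ≤ a.factorial * (a + b) ^ b := by
  induction b with
  | zero => simp
  | succ b ih =>
      have h1 : (a + (b+1)).factorial = (a + b + 1) * (a + b).factorial := by
        rw [← Nat.add_assoc, Nat.factorial_succ]
      rw [h1]
      calc (a + b + 1) * (a + b).factorial
          ≤ (a + b + 1) * (a.factorial * (a + b) ^ b) :=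
            Nat.mul_le_mul_left _ ih
        _ ≤ (a + b + 1) * (a.factorial * (a + b + 1) ^ b) := by
            exact Nat.mul_le_mul_left _ (Nat.mul_le_mul_left _
              (Nat.pow_le_pow_left (Nat.le_succ _) b))
        _ = a.factorial * (a + (b+1)) ^ (b+1) := by ring_nf

private lemma my_key (φ : ℝ → ℝ) (hφ : ContDiff ℝ (⊤ : ℕ∞) φ) (B M T : ℝ) (hB : 0 < B) (hM : 0 < M)
    (n : ℕ) (hn : 1 ≤ n)
    (hbound : ∀ k : ℕ, 1 ≤ k → ∀ t ∈ Set.Icc (0:ℝ) T,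
      |iteratedDeriv k φ t| ≤ B * ((n + k - 1).factorial / (n - 1).factorial : ℝ) * M ^ k)
    (a t : ℝ) (ha : 0 ≤ a) (hat : a < t) (htT : t ≤ T)
    (hder : ∀ k : ℕ, 1 ≤ k → iteratedDeriv k φ a = 0)
    (hdist : M * (t - a) ≤ 1/2) :
    φ t = φ a := by
  have hs : UniqueDiffOn ℝ (Icc a t) := uniqueDiffOn_Icc hat
  have haI : a ∈ Icc a t := left_mem_Icc.2 hat.le
  -- Taylor polynomial collapses to φ a
  have hTay : ∀ m : ℕ, taylorWithinEval φ m (Icc a t) a t = φ a := by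
    intro m
    rw [taylor_within_apply, Finset.sum_eq_single 0]
    · simp
    · intro k _ hk0
      rw [my_iteratedDerivWithin_eq hφ hs haI k, hder k (Nat.one_le_iff_ne_zero.2 hk0)]
      simp
    · simp
  -- the main bound
  set q : ℝ := M * (t - a) with hq
  have hq0 : 0 ≤ q := mul_nonneg hM.le (by linarith)
  have key : ∀ m : ℕ, |φ t - φ a| ≤
      B * 2 ^ (n - 1) * (((m + n : ℕ) : ℝ) ^ (n - 1) * (1/2) ^ (m + n)) := by
    intro m
    have hf : ContDiffOn ℝ m φ (Icc a t) := (hφ.of_le (by exact_mod_cast le_top)).contDiffOn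
    have hdm : Differentiable ℝ (iteratedDeriv m φ) :=
      hφ.differentiable_iteratedDeriv m (by exact_mod_cast lt_top_iff_ne_top.2 (by simp))
    have hf' : DifferentiableOn ℝ (iteratedDerivWithin m φ (Icc a t)) (Ioo a t) := by
      refine hdm.differentiableOn.congr fun x hx => ?_
      exact my_iteratedDerivWithin_eq hφ hs (Ioo_subset_Icc_self hx) m
    obtain ⟨x', hx', hTe⟩ := taylor_mean_remainder_lagrange (x := t) (x₀ := a) hat.ne
      (by rwa [uIcc_of_le hat.le]) (by rwa [uIcc_of_le hat.le, uIoo_of_le hat.le])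
    rw [uIcc_of_le hat.le] at hTe
    rw [uIoo_of_le hat.le] at hx'
    rw [hTay m] at hTe
    have hx'I : x' ∈ Icc a t := Ioo_subset_Icc_self hx'
    have hx'T : x' ∈ Icc (0:ℝ) T := ⟨le_trans ha hx'I.1, le_trans hx'I.2 htT⟩
    have hb := hbound (m+1) (Nat.le_add_left 1 m) x' hx'T
    have hnm : n + (m + 1) - 1 = n + m := by omega
    rw [hnm] at hb
    have hwithin : iteratedDerivWithin (m+1) φ (Icc a t) x' = iteratedDeriv (m+1) φ x' :=
      my_iteratedDerivWithin_eq hφ hs hx'I (m+1)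
    have hta : 0 ≤ t - a := by linarith
    have step1 : |φ t - φ a| ≤
        B * ((n + m).factorial / (n - 1).factorial : ℝ) * M ^ (m+1) *
          (t - a) ^ (m+1) / (m+1).factorial := by
      rw [hTe, hwithin, abs_div, abs_mul,
        abs_of_nonneg (pow_nonneg hta (m+1)),
        abs_of_nonneg (by positivity : (0:ℝ) ≤ ((m+1).factorial : ℝ))]
      exact (div_le_div_iff_of_pos_right (by positivity)).2
        (mul_le_mul_of_nonneg_right hb (pow_nonneg hta (m+1)))
    refine step1.trans ?_
    -- rearrange: B * ((n+m)!/(n-1)!) * q^(m+1) / (m+1)!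
    have e1 : B * ((n + m).factorial / (n - 1).factorial : ℝ) * M ^ (m+1) *
          (t - a) ^ (m+1) / (m+1).factorial
        = B * (((n + m).factorial : ℝ) / ((n - 1).factorial * (m+1).factorial)) * q ^ (m+1) := by
      rw [hq, mul_pow]
      field_simp
    rw [e1]
    -- bound factorial ratio by (n+m)^(n-1)
    have hfact : ((n + m).factorial : ℝ) / ((n - 1).factorial * (m+1).factorial)
        ≤ ((m + n : ℕ) : ℝ) ^ (n - 1) := by
      have h1 : ((m+1) + (n-1)).factorial ≤ (m+1).factorial * ((m+1) + (n-1)) ^ (n-1) :=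
        my_fact_le (m+1) (n-1)
      have h2 : (m+1) + (n-1) = n + m := by omega
      rw [h2] at h1
      have h3 : (1:ℝ) ≤ ((n-1).factorial : ℝ) := by exact_mod_cast Nat.one_le_iff_ne_zero.2 (Nat.factorial_ne_zero _)
      rw [div_le_iff₀ (by positivity)]
      calc ((n + m).factorial : ℝ) ≤ ((m+1).factorial : ℝ) * ((n + m : ℕ) : ℝ) ^ (n-1) := by
            exact_mod_cast h1
        _ = ((m + n : ℕ) : ℝ) ^ (n - 1) * (1 * ((m+1).factorial : ℝ)) := by
            rw [Nat.add_comm n m]; ring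
        _ ≤ ((m + n : ℕ) : ℝ) ^ (n - 1) * (((n-1).factorial : ℝ) * (m+1).factorial) := by
            refine mul_le_mul_of_nonneg_left ?_ (by positivity)
            exact mul_le_mul_of_nonneg_right h3 (by positivity)
    have hqpow : q ^ (m+1) ≤ (1/2:ℝ) ^ (m+1) :=
      pow_le_pow_left₀ hq0 hdist (m+1)
    have e2 : ((1:ℝ)/2) ^ (m+1) = 2 ^ (n-1) * (1/2) ^ (m + n) := by
      have h2' : m + n = (m + 1) + (n - 1) := by omega
      have h3' : (2:ℝ)^(n-1) * ((1:ℝ)/2)^(n-1) = 1 := by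
        rw [← mul_pow]; norm_num
      rw [h2', pow_add ((1:ℝ)/2) (m+1) (n-1)]
      calc ((1:ℝ)/2)^(m+1) = ((2:ℝ)^(n-1) * ((1:ℝ)/2)^(n-1)) * ((1:ℝ)/2)^(m+1) := by
            rw [h3']; ring
        _ = 2^(n-1) * (((1:ℝ)/2)^(m+1) * ((1:ℝ)/2)^(n-1)) := by ring
    calc B * (((n + m).factorial : ℝ) / ((n - 1).factorial * (m+1).factorial)) * q ^ (m+1)
        ≤ B * (((m + n : ℕ) : ℝ) ^ (n - 1)) * ((1/2) ^ (m+1)) := by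
          apply mul_le_mul (mul_le_mul_of_nonneg_left hfact hB.le) hqpow (by positivity)
          positivity
      _ = B * 2 ^ (n - 1) * (((m + n : ℕ) : ℝ) ^ (n - 1) * (1/2) ^ (m + n)) := by
          rw [e2]; ring
  -- limit argument
  have hlim : Tendsto (fun m : ℕ => B * 2 ^ (n - 1) *
      (((m + n : ℕ) : ℝ) ^ (n - 1) * (1/2) ^ (m + n))) atTop (nhds 0) := by
    have h0 : Tendsto (fun m : ℕ => ((m : ℝ)) ^ (n - 1) * (1/2) ^ m) atTop (nhds 0) := by
      have := (summable_pow_mul_geometric_of_norm_lt_one (R := ℝ) (n - 1)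
        (r := 1/2) (by norm_num)).tendsto_atTop_zero
      simpa using this
    have h1 : Tendsto (fun m : ℕ => (((m + n : ℕ) : ℝ)) ^ (n - 1) * (1/2) ^ (m + n))
        atTop (nhds 0) := h0.comp (tendsto_add_atTop_nat n)
    simpa using h1.const_mul (B * 2 ^ (n - 1))
  have : |φ t - φ a| ≤ 0 := ge_of_tendsto' hlim key
  have := abs_nonneg (φ t - φ a)
  have : |φ t - φ a| = 0 := le_antisymm (by linarith) (by linarith)
  have := abs_eq_zero.1 this
  linarith

theorem stmt_1 (T : ℝ) (hT : 0 < T) (φ : ℝ → ℝ) (hφ : ContDiff ℝ (⊤ : ℕ∞) φ)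
    (B M : ℝ) (hB : 0 < B) (hM : 0 < M) (n : ℕ) (hn : 1 ≤ n)
    (hbound : ∀ k : ℕ, 1 ≤ k → ∀ t ∈ Set.Icc (0:ℝ) T,
      |iteratedDeriv k φ t| ≤ B * ((n + k - 1).factorial / (n - 1).factorial : ℝ) * M ^ k)
    (hconst : ∀ t₀ ∈ Set.Icc (0:ℝ) T, (∀ t ∈ Set.Icc (0:ℝ) t₀, φ t = φ 0) →
      ∀ k : ℕ, 1 ≤ k → iteratedDeriv k φ t₀ = 0)
    (hzero : ∀ k : ℕ, 1 ≤ k → iteratedDeriv k φ 0 = 0) :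
    ∀ t ∈ Set.Icc (0:ℝ) T, φ t = φ 0 := by
  have hstep : ∀ j : ℕ, ∀ t ∈ Set.Icc (0:ℝ) T, t ≤ j * (1/(2*M)) → φ t = φ 0 := by
    intro j
    induction j with
    | zero =>
        intro t ht hle
        have h0 : t = 0 := le_antisymm (by simpa using hle) ht.1
        rw [h0]
    | succ j ih =>
        intro t ht hle
        by_cases hcase : t ≤ j * (1/(2*M))
        · exact ih t ht hcase
        · push_neg at hcase
          set a := (j : ℝ) * (1/(2*M)) with haa
          have ha0 : 0 ≤ a := by positivity
          have hat : a < t := hcase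
          have haT : a ∈ Set.Icc (0:ℝ) T := ⟨ha0, le_trans hat.le ht.2⟩
          have hconstA : ∀ s ∈ Set.Icc (0:ℝ) a, φ s = φ 0 := by
            intro s hs
            exact ih s ⟨hs.1, le_trans hs.2 haT.2⟩ hs.2
          have hderA : ∀ k, 1 ≤ k → iteratedDeriv k φ a = 0 :=
            hconst a haT hconstA
          have hdist : M * (t - a) ≤ 1/2 := by
            have h1 : t - a ≤ 1/(2*M) := by
              have h2 : t ≤ ((j:ℝ)+1) * (1/(2*M)) := by push_cast at hle; linarith
              have h3 : ((j:ℝ)+1) * (1/(2*M)) = a + 1/(2*M) := by rw [haa]; ring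
              linarith
            calc M * (t - a) ≤ M * (1/(2*M)) := mul_le_mul_of_nonneg_left h1 hM.le
              _ = 1/2 := by field_simp
          have hk := my_key φ hφ B M T hB hM n hn hbound a t ha0 hat ht.2 hderA hdist
          rw [hk, hconstA a ⟨ha0, le_refl a⟩]
  intro t ht
  obtain ⟨j, hj⟩ := exists_nat_ge (t * (2*M))
  refine hstep j t ht ?_
  rw [mul_one_div, le_div_iff₀ (by positivity : (0:ℝ) < 2*M)]
  exact hj
end

section
/- Let φ : ℝ → ℝ be infinitely differentiable with φ^{(k)}(0) = 0 for all k ≥ 1 and |φ^{(k)}(t)| ≤ B · ((n+k-1)!/(n-1)!) · M^k for all t ∈ [0, t₁] and k ≥ 1, where 0 < t₁ < 1/M. Then φ(t) = φ(0) for all t ∈ [0, t₁]. -/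
lemma iterDerivWithin_eq_aux {f : ℝ → ℝ} (hf : ContDiff ℝ (⊤ : ℕ∞) f) {s : Set ℝ}
    (hs : UniqueDiffOn ℝ s) (k : ℕ) : ∀ x ∈ s, iteratedDerivWithin k f s x = iteratedDeriv k f x := by
  induction k with
  | zero => intro x hx; simp
  | succ k ih =>
    intro x hx
    rw [iteratedDerivWithin_succ, iteratedDeriv_succ]
    rw [derivWithin_congr ih (ih x hx)]
    exact ((hf.differentiable_iteratedDeriv k (WithTop.coe_lt_coe.mpr (ENat.coe_lt_top k))).differentiableAt).derivWithin
      (hs.uniqueDiffWithinAt hx)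

theorem stmt_2 (φ : ℝ → ℝ) (hφ : ContDiff ℝ (⊤ : ℕ∞) φ)
    (B M t₁ : ℝ) (hB : 0 < B) (hM : 0 < M) (n : ℕ) (hn : 1 ≤ n)
    (ht₁ : 0 < t₁) (ht₁M : t₁ < 1 / M)
    (hzero : ∀ k : ℕ, 1 ≤ k → iteratedDeriv k φ 0 = 0)
    (hbound : ∀ k : ℕ, 1 ≤ k → ∀ t ∈ Set.Icc (0:ℝ) t₁,
      |iteratedDeriv k φ t| ≤ B * ((n + k - 1).factorial / (n - 1).factorial : ℝ) * M ^ k) :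
    ∀ t ∈ Set.Icc (0:ℝ) t₁, φ t = φ 0 := by
  intro t ht
  obtain ⟨ht0, htt1⟩ := ht
  rcases eq_or_lt_of_le ht0 with h0 | h0
  · rw [← h0]
  set x : ℝ := M * t₁ with hx
  have hx0 : 0 < x := mul_pos hM ht₁
  have hx1 : x < 1 := by
    rw [hx]
    calc M * t₁ < M * (1 / M) := by exact (mul_lt_mul_iff_right₀ hM).mpr ht₁M
    _ = 1 := by field_simp
  have hud : UniqueDiffOn ℝ (Set.Icc (0:ℝ) t) := uniqueDiffOn_Icc h0
  -- key bound for each k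
  have key : ∀ k : ℕ, |φ t - φ 0| ≤ B * ((n + k).choose (n - 1)) * x ^ (k + 1) := by
    intro k
    obtain ⟨x', hx', heq⟩ := taylor_mean_remainder_lagrange (f := φ) (n := k) h0.ne
      (hφ.contDiffOn.of_le (by exact_mod_cast le_top))
      (by
        rw [Set.uIcc_of_le h0.le, Set.uIoo_of_le h0.le]
        apply DifferentiableOn.congr
          (f := iteratedDeriv k φ)
          ((hφ.differentiable_iteratedDeriv k (WithTop.coe_lt_coe.mpr (ENat.coe_lt_top k))).differentiableOn)
        intro y hy
        exact iterDerivWithin_eq_aux hφ hud k y (Set.mem_Icc_of_Ioo hy))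
    rw [Set.uIcc_of_le h0.le] at heq
    rw [Set.uIoo_of_le h0.le] at hx'
    have htay : taylorWithinEval φ k (Set.Icc 0 t) 0 t = φ 0 := by
      rw [taylor_within_apply]
      rw [Finset.sum_eq_single 0]
      · simp
      · intro i hi hi0
        rw [iterDerivWithin_eq_aux hφ hud i 0 (Set.left_mem_Icc.mpr h0.le),
          hzero i (Nat.one_le_iff_ne_zero.mpr hi0)]
        simp
      · simp
    rw [htay] at heq
    rw [heq]
    have hx'1 : x' ∈ Set.Icc (0:ℝ) t₁ :=
      ⟨hx'.1.le, le_trans hx'.2.le htt1⟩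
    have hb := hbound (k+1) (by omega) x' hx'1
    rw [iterDerivWithin_eq_aux hφ hud (k+1) x' (Set.mem_Icc_of_Ioo hx')] at *
    have hfac : ((n + (k+1) - 1).factorial / (n - 1).factorial : ℝ)
        = ((n + k).choose (n-1) : ℝ) * (k+1).factorial := by
      have h1 : n + (k+1) - 1 = n + k := by omega
      rw [h1]
      have h2 : (n-1) ≤ n + k := by omega
      rw [Nat.cast_choose ℝ h2]
      have h3 : n + k - (n - 1) = k + 1 := by omega
      rw [h3]
      have : ((n-1).factorial : ℝ) ≠ 0 := Nat.cast_ne_zero.mpr (Nat.factorial_ne_zero _)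
      field_simp
    rw [hfac] at hb
    have htx : 0 ≤ t - 0 := by linarith
    rw [abs_div, abs_mul, sub_zero, abs_pow, abs_of_nonneg h0.le]
    rw [abs_of_pos (by positivity : (0:ℝ) < ((k+1).factorial : ℝ))]
    rw [div_le_iff₀ (by positivity)]
    calc |iteratedDeriv (k+1) φ x'| * t ^ (k+1)
        ≤ (B * (((n + k).choose (n-1) : ℝ) * (k+1).factorial) * M ^ (k+1)) * t ^ (k+1) := by
          apply mul_le_mul_of_nonneg_right hb (by positivity)
      _ = B * ((n + k).choose (n - 1)) * (M*t) ^ (k + 1) * (k+1).factorial := by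
          rw [mul_pow]; ring
      _ ≤ B * ((n + k).choose (n - 1)) * x ^ (k + 1) * (k+1).factorial := by
          apply mul_le_mul_of_nonneg_right _ (by positivity)
          apply mul_le_mul_of_nonneg_left _ (by positivity)
          apply pow_le_pow_left₀ (by positivity)
          exact mul_le_mul_of_nonneg_left htt1 hM.le
  -- limit
  have hlim : Filter.Tendsto (fun k : ℕ => B * ((n + k).choose (n - 1)) * x ^ (k + 1))
      Filter.atTop (nhds 0) := by
    have h1 : Filter.Tendsto (fun m : ℕ => (m:ℝ) ^ (n-1) * x ^ m) Filter.atTop (nhds 0) :=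
      tendsto_pow_const_mul_const_pow_of_abs_lt_one (n-1) (by rwa [abs_of_pos hx0])
    have h2 : Filter.Tendsto (fun k : ℕ => ((n+k:ℕ):ℝ) ^ (n-1) * x ^ (n+k)) Filter.atTop (nhds 0) :=
      h1.comp (by simpa [Nat.add_comm] using Filter.tendsto_add_atTop_nat n)
    have h3 : Filter.Tendsto
        (fun k : ℕ => B * ((((n+k:ℕ):ℝ) ^ (n-1) * x ^ (n+k)) * (x ^ (n-1))⁻¹)) Filter.atTop
        (nhds (B * (0 * (x ^ (n-1))⁻¹))) := by
      apply Filter.Tendsto.const_mul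
      exact h2.mul_const _
    rw [zero_mul, mul_zero] at h3
    apply squeeze_zero_norm _ h3
    intro k
    rw [Real.norm_eq_abs, abs_of_nonneg (by positivity)]
    have hxsplit : x ^ (n + k) * (x ^ (n-1))⁻¹ = x ^ (k+1) := by
      have : n + k = (k+1) + (n-1) := by omega
      rw [this, pow_add]
      field_simp
    calc B * ((n + k).choose (n - 1)) * x ^ (k + 1)
        ≤ B * (((n+k:ℕ):ℝ) ^ (n-1)) * x ^ (k+1) := by
          apply mul_le_mul_of_nonneg_right _ (by positivity)
          apply mul_le_mul_of_nonneg_left _ hB.le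
          exact_mod_cast Nat.choose_le_pow (n+k) (n-1)
      _ = B * (((n+k:ℕ):ℝ) ^ (n-1) * x ^ (n+k) * (x ^ (n-1))⁻¹) := by
          rw [← hxsplit]; ring
  have : |φ t - φ 0| ≤ 0 :=
    le_of_tendsto_of_tendsto' tendsto_const_nhds hlim key
  have := abs_nonpos_iff.mp this
  linarith [sub_eq_zero.mp this]
end

section
/- Let H be a real inner product space and q*, c real numbers with c < q*. Let σ¹, …, σᵐ and τ¹, …, τᵐ be vectors in H with ‖σˡ‖² = ‖τˡ‖² = q* for all l, ⟨σˡ, σˡ'⟩ ≤ c and ⟨τˡ, τˡ'⟩ ≤ c for all l ≠ l', and ⟨σˡ, τˡ'⟩ = c for all l, l'. Then the barycenters σ̄ = (1/m)∑σˡ and τ̄ = (1/m)∑τˡ satisfy ‖σ̄ − τ̄‖² ≤ 2(q* − c)/m. -/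
open Finset

section GramBounds

variable {E : Type*} [NormedAddCommGroup E] [InnerProductSpace ℝ E] {ι : Type*} [Fintype ι]

theorem norm_sum_sq_le_of_inner_le {f : ι → E} {q c : ℝ} (hnorm : ∀ i, ‖f i‖ ^ 2 ≤ q)
    (hoff : ∀ i j, i ≠ j → inner ℝ (f i) (f j) ≤ c) :
    ‖∑ i, f i‖ ^ 2 ≤ Fintype.card ι * q + Fintype.card ι * (Fintype.card ι - 1) * c := by
  classical
  have hrow : ∀ i, inner ℝ (f i) (∑ j, f j) ≤ q + (Fintype.card ι - 1) * c := by
    intro i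
    have hcard : ((univ.erase i).card : ℝ) = Fintype.card ι - 1 := by
      rw [card_erase_of_mem (mem_univ i), card_univ,
        Nat.cast_sub (Fintype.card_pos_iff.mpr ⟨i⟩), Nat.cast_one]
    have hoff_sum : ∑ j ∈ univ.erase i, inner ℝ (f i) (f j) ≤ (Fintype.card ι - 1) * c := by
      calc ∑ j ∈ univ.erase i, inner ℝ (f i) (f j) ≤ ∑ _j ∈ univ.erase i, c :=
            sum_le_sum fun j hj => hoff i j (ne_of_mem_erase hj).symm
        _ = (Fintype.card ι - 1) * c := by rw [sum_const, nsmul_eq_mul, hcard]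
    rw [inner_sum, ← add_sum_erase _ _ (mem_univ i), real_inner_self_eq_norm_sq]
    linarith [hnorm i]
  calc ‖∑ i, f i‖ ^ 2 = ∑ i, inner ℝ (f i) (∑ j, f j) := by
        rw [← real_inner_self_eq_norm_sq, sum_inner]
    _ ≤ ∑ _i : ι, (q + (Fintype.card ι - 1) * c) := sum_le_sum fun i _ => hrow i
    _ = Fintype.card ι * q + Fintype.card ι * (Fintype.card ι - 1) * c := by
        rw [sum_const, card_univ, nsmul_eq_mul]; ring

theorem inner_sum_sum_of_inner_eq {κ : Type*} [Fintype κ] {f : ι → E} {g : κ → E} {c : ℝ}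
    (h : ∀ i j, inner ℝ (f i) (g j) = c) :
    inner ℝ (∑ i, f i) (∑ j, g j) = Fintype.card ι * Fintype.card κ * c := by
  simp only [sum_inner, inner_sum, h, sum_const, card_univ, nsmul_eq_mul]
  ring

theorem norm_sum_sub_sum_sq_le {f g : ι → E} {q c : ℝ}
    (hnormf : ∀ i, ‖f i‖ ^ 2 ≤ q) (hnormg : ∀ i, ‖g i‖ ^ 2 ≤ q)
    (hf : ∀ i j, i ≠ j → inner ℝ (f i) (f j) ≤ c) (hg : ∀ i j, i ≠ j → inner ℝ (g i) (g j) ≤ c)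
    (hfg : ∀ i j, inner ℝ (f i) (g j) = c) :
    ‖∑ i, f i - ∑ i, g i‖ ^ 2 ≤ 2 * Fintype.card ι * (q - c) := by
  rw [norm_sub_sq_real, inner_sum_sum_of_inner_eq hfg]
  linarith [norm_sum_sq_le_of_inner_le hnormf hf, norm_sum_sq_le_of_inner_le hnormg hg]

end GramBounds

theorem stmt_8_general {H : Type*} [NormedAddCommGroup H] [InnerProductSpace ℝ H]
    (m : ℕ) (qs c : ℝ)
    (σ τ : Fin m → H)
    (hnormσ : ∀ l, ‖σ l‖ ^ 2 = qs) (hnormτ : ∀ l, ‖τ l‖ ^ 2 = qs)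
    (hσ : ∀ l l', l ≠ l' → (inner ℝ (σ l) (σ l') : ℝ) ≤ c)
    (hτ : ∀ l l', l ≠ l' → (inner ℝ (τ l) (τ l') : ℝ) ≤ c)
    (hστ : ∀ l l', (inner ℝ (σ l) (τ l') : ℝ) = c) :
    ‖(m : ℝ)⁻¹ • ∑ l, σ l - (m : ℝ)⁻¹ • ∑ l, τ l‖ ^ 2 ≤ 2 * (qs - c) / m := by
  have hsum := norm_sum_sub_sum_sq_le (fun l => (hnormσ l).le) (fun l => (hnormτ l).le) hσ hτ hστ
  rw [Fintype.card_fin] at hsum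
  rw [← smul_sub, norm_smul, mul_pow, norm_inv, Real.norm_natCast]
  calc (m : ℝ)⁻¹ ^ 2 * ‖∑ l, σ l - ∑ l, τ l‖ ^ 2 ≤ (m : ℝ)⁻¹ ^ 2 * (2 * m * (qs - c)) :=
        mul_le_mul_of_nonneg_left hsum (by positivity)
    _ = 2 * (qs - c) / m := by
        rcases Nat.eq_zero_or_pos m with rfl | hm
        · simp
        · field_simp

theorem stmt_8 {H : Type*} [NormedAddCommGroup H] [InnerProductSpace ℝ H]
    (m : ℕ) (hm : 1 ≤ m) (qs c : ℝ) (hc : c < qs)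
    (σ τ : Fin m → H)
    (hnormσ : ∀ l, ‖σ l‖ ^ 2 = qs) (hnormτ : ∀ l, ‖τ l‖ ^ 2 = qs)
    (hσ : ∀ l l', l ≠ l' → (inner ℝ (σ l) (σ l') : ℝ) ≤ c)
    (hτ : ∀ l l', l ≠ l' → (inner ℝ (τ l) (τ l') : ℝ) ≤ c)
    (hστ : ∀ l l', (inner ℝ (σ l) (τ l') : ℝ) = c) :
    ‖(m : ℝ)⁻¹ • ∑ l, σ l - (m : ℝ)⁻¹ • ∑ l, τ l‖ ^ 2 ≤ 2 * (qs - c) / m :=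
  stmt_8_general m qs c σ τ hnormσ hnormτ hσ hτ hστ
end
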